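/- Let $m,n \in \mathbb{N}$, let $(i_1,\dots,i_m)$ be a nondecreasing multi-index with at least two distinct entries, with tight pair $((j_1,\dots,j_l),(\alpha_1,\dots,\alpha_l))$ (distinct indices $j_1 < \dots < j_l$ and powers $\alpha_k \geq 1$ with $\sum_k \alpha_k = m$ such that $x_{i_1}\cdots x_{i_m} = x_{j_1}^{\alpha_1}\cdots x_{j_l}^{\alpha_l}$). Let $\mathcal{B} = (b_{p_1\dots p_m})$ be a symmetric tensor supported on the permutations of $(i_1,\dots,i_m)$ and the diagonal positions $(p,\dots,p)$ with $p \in \{i_1,\dots,i_m\}$. Then $\mathcal{B}$ is a generalized diagonally dominant tensor with nonnegative diagonal if and only if $b_{pp\dots p} \geq 0$ for all $p \in \{i_1,\dots,i_m\}$ and $\prod_{k=1}^l b_{j_k\dots j_k}^{\alpha_k} \geq c\,|b_{i_1\dots i_m}|^m$, where $c = \prod_{k=1}^l \binom{m-1}{\alpha - e_k}^{\alpha_k}$ and $\binom{m-1}{\alpha-e_k}$ is the multinomial coefficient $\frac{(m-1)!}{\alpha_1!\cdots(\alpha_k-1)!\cdots\alpha_l!}$. -/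

import Mathlib

open Finset

/-- An index of an `m`-order `n`-dimensional tensor. -/
abbrev Idx (m n : ℕ) := Fin m → Fin n

/-- The diagonal index `(i, i, …, i)`. -/
def diagIdx {m n : ℕ} (i : Fin n) : Idx m n := fun _ => i

/-- A tensor is symmetric if its entries are invariant under permutations of the indices. -/
def IsSymmetric {m n : ℕ} (A : Idx m n → ℝ) : Prop :=
  ∀ (σ : Equiv.Perm (Fin m)) (j : Idx m n), A (j ∘ σ) = A j

/-- The sum of the absolute values of the off-diagonal entries on the `i`-th slice. -/
def rowSum {m n : ℕ} (hm : 0 < m) (A : Idx m n → ℝ) (i : Fin n) : ℝ :=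
  ∑ j ∈ Finset.univ.filter (fun j : Idx m n => j ⟨0, hm⟩ = i ∧ j ≠ diagIdx i), |A j|

/-- A tensor is diagonally dominant if each diagonal entry dominates (in absolute value)
the sum of the absolute values of the off-diagonal entries on its slice. -/
def IsDD {m n : ℕ} (hm : 0 < m) (A : Idx m n → ℝ) : Prop :=
  ∀ i : Fin n, rowSum hm A i ≤ |A (diagIdx i)|

/-- `A` is a symmetric generalized diagonally dominant tensor with nonnegative diagonal:
there is a positive diagonal scaling making it diagonally dominant. -/
def IsGDDplus {m n : ℕ} (hm : 0 < m) (A : Idx m n → ℝ) : Prop :=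
  IsSymmetric A ∧ (∀ i : Fin n, 0 ≤ A (diagIdx i)) ∧
    ∃ d : Fin n → ℝ, (∀ i, 0 < d i) ∧ IsDD hm (fun j => A j * ∏ k : Fin m, d (j k))

/-- The set of distinct values appearing in the multi-index `jh` (the tight index). -/
def suppIdx {m n : ℕ} (jh : Idx m n) : Finset (Fin n) := Finset.image jh Finset.univ

/-- The multiplicity of the value `p` in the multi-index `jh` (the tight power). -/
def multIdx {m n : ℕ} (jh : Idx m n) (p : Fin n) : ℕ :=
  (Finset.univ.filter fun k : Fin m => jh k = p).card

/-- The constant `c = ∏_k (m-1 choose α - e_k)^{α_k}` associated with a multi-index. -/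
def cCoef {m n : ℕ} (jh : Idx m n) : ℕ :=
  ∏ p ∈ suppIdx jh,
    (Nat.multinomial (suppIdx jh)
      (fun q => if q = p then multIdx jh q - 1 else multIdx jh q)) ^ (multIdx jh p)

/-
After scaling by `d`, every nonzero off-diagonal entry of slice `i` has absolute value
`|b| ∏ₖ d_{jₖ} = |b| D` with `D = ∏ₚ d_p^{α_p}`, and slice `i` holds `Nᵢ = (m-1 choose α - eᵢ)`
of them: double counting the permutations of `jh` by position gives `m Nᵢ = (m choose α) αᵢ`.
So diagonal dominance reads `Nᵢ |b| D ≤ b_{i…i} dᵢ^m` for `i` in the support. Raising these to the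
powers `αᵢ` and multiplying, `D^m` cancels and leaves `c |b|^m ≤ ∏ b_{i…i}^{αᵢ}`. Conversely,
`dᵢ = (Nᵢ |b| / b_{i…i})^{1/m}` gives `D^m = c |b|^m / ∏ b_{i…i}^{αᵢ} ≤ 1`, hence dominance.
-/

open scoped Nat

theorem Nat.sum_mul_multinomial_ite_pred {ι : Type*} [DecidableEq ι] {s : Finset ι}
    {f : ι → ℕ} {i : ι} (hi : i ∈ s) (hfi : 0 < f i) :
    (∑ q ∈ s, f q) * Nat.multinomial s (fun q => if q = i then f q - 1 else f q)
      = f i * Nat.multinomial s f := by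
  set g : ι → ℕ := fun q => if q = i then f q - 1 else f q
  have hsum : ∑ q ∈ s, f q = ∑ q ∈ s, g q + 1 := calc
    ∑ q ∈ s, f q = ∑ q ∈ s, (g q + if q = i then 1 else 0) :=
      Finset.sum_congr rfl fun q _ => by by_cases hq : q = i <;> simp [g, hq]; omega
    _ = ∑ q ∈ s, g q + 1 := by rw [Finset.sum_add_distrib, Finset.sum_ite_eq', if_pos hi]
  have hprod : ∏ q ∈ s, (f q)! = (∏ q ∈ s, (g q)!) * f i := calc
    ∏ q ∈ s, (f q)! = ∏ q ∈ s, ((g q)! * if q = i then f q else 1) :=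
      Finset.prod_congr rfl fun q _ => by
        by_cases hq : q = i
        · subst hq; simp [g, mul_comm, Nat.mul_factorial_pred hfi.ne']
        · simp [g, hq]
    _ = (∏ q ∈ s, (g q)!) * f i := by
      rw [Finset.prod_mul_distrib, Finset.prod_ite_eq', if_pos hi]
  have hspec := Nat.multinomial_spec s f
  rw [hprod, hsum, Nat.factorial_succ, ← Nat.multinomial_spec s g] at hspec
  have hpos : 0 < ∏ q ∈ s, (g q)! := Finset.prod_pos fun q _ => Nat.factorial_pos _
  rw [hsum]
  exact Nat.eq_of_mul_eq_mul_left hpos (by linear_combination hspec.symm)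

section PermOrbit

variable {m n : ℕ}

def permOrbit (jh : Idx m n) : Finset (Idx m n) :=
  univ.filter fun j => ∃ σ : Equiv.Perm (Fin m), j = jh ∘ σ

lemma mem_permOrbit {jh j : Idx m n} :
    j ∈ permOrbit jh ↔ ∃ σ : Equiv.Perm (Fin m), j = jh ∘ σ := by
  simp [permOrbit]

lemma multIdx_pos {jh : Idx m n} {p : Fin n} (hp : p ∈ suppIdx jh) : 0 < multIdx jh p := by
  obtain ⟨k, -, rfl⟩ := mem_image.1 hp
  exact card_pos.2 ⟨k, by simp⟩

lemma sum_multIdx (jh : Idx m n) : ∑ p ∈ suppIdx jh, multIdx jh p = m :=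
  (card_eq_sum_card_image jh univ).symm.trans (card_fin m)

lemma prod_apply_eq_prod_pow_multIdx {M : Type*} [CommMonoid M] (jh : Idx m n) (d : Fin n → M) :
    ∏ k, d (jh k) = ∏ p ∈ suppIdx jh, d p ^ multIdx jh p :=
  prod_comp d jh

lemma multIdx_comp_perm (jh : Idx m n) (σ : Equiv.Perm (Fin m)) (p : Fin n) :
    multIdx (jh ∘ σ) p = multIdx jh p := by
  simp only [multIdx, card_filter]
  exact Equiv.sum_comp σ fun k => if jh k = p then 1 else 0

lemma card_perm_comp_eq_of_mem_permOrbit {jh j : Idx m n} (hj : j ∈ permOrbit jh) :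
    #{σ : Equiv.Perm (Fin m) | jh ∘ σ = j} = ∏ p ∈ suppIdx jh, (multIdx jh p)! := by
  obtain ⟨τ, rfl⟩ := mem_permOrbit.1 hj
  have hstab : Fintype.card {σ : Equiv.Perm (Fin m) // jh ∘ σ = jh}
      = ∏ p ∈ suppIdx jh, (multIdx jh p)! := by
    simp only [DomMulAct.stabilizer_card' jh, Fintype.card_subtype]
    rfl
  rw [← Fintype.card_subtype, ← hstab]
  exact (Fintype.card_congr <| (Equiv.mulRight τ).subtypeEquiv fun σ =>
    τ.surjective.injective_comp_right.eq_iff.symm).symm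

lemma card_permOrbit (jh : Idx m n) :
    #(permOrbit jh) = Nat.multinomial (suppIdx jh) (multIdx jh) := by
  have hfiber := card_eq_sum_card_fiberwise (s := univ)
    (f := fun σ : Equiv.Perm (Fin m) => jh ∘ σ) fun σ _ => mem_permOrbit.2 ⟨σ, rfl⟩
  rw [sum_congr rfl fun j hj => card_perm_comp_eq_of_mem_permOrbit hj, sum_const, smul_eq_mul,
    card_univ, Fintype.card_perm, Fintype.card_fin] at hfiber
  have hspec := Nat.multinomial_spec (suppIdx jh) (multIdx jh)
  rw [sum_multIdx, hfiber, mul_comm] at hspec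
  exact Nat.eq_of_mul_eq_mul_right (prod_pos fun p _ => Nat.factorial_pos _) hspec.symm

lemma card_permOrbit_filter_apply_eq (jh : Idx m n) (i : Fin n) (k k' : Fin m) :
    #{j ∈ permOrbit jh | j k = i} = #{j ∈ permOrbit jh | j k' = i} := by
  have hswap : ∀ j ∈ permOrbit jh, j ∘ Equiv.swap k k' ∈ permOrbit jh := fun j hj => by
    obtain ⟨σ, rfl⟩ := mem_permOrbit.1 hj
    exact mem_permOrbit.2 ⟨(Equiv.swap k k').trans σ, rfl⟩
  refine card_nbij' (· ∘ Equiv.swap k k') (· ∘ Equiv.swap k k') ?_ ?_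
    (fun j _ => by ext; simp) (fun j _ => by ext; simp)
  all_goals
    intro j hj
    simp only [coe_filter, Set.mem_ofPred_eq] at hj ⊢
    exact ⟨hswap j hj.1, by simpa using hj.2⟩

lemma mul_card_permOrbit_filter_apply (jh : Idx m n) (i : Fin n) (k : Fin m) :
    m * #{j ∈ permOrbit jh | j k = i} = #(permOrbit jh) * multIdx jh i := by
  have hrow : ∀ j ∈ permOrbit jh, #{k | j k = i} = multIdx jh i := fun j hj => by
    obtain ⟨σ, rfl⟩ := mem_permOrbit.1 hj
    exact multIdx_comp_perm jh σ i
  have hcount := sum_card_bipartiteAbove_eq_sum_card_bipartiteBelow (s := permOrbit jh)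
    (t := univ) (r := fun j k => j k = i)
  simp only [bipartiteAbove, bipartiteBelow] at hcount
  rw [sum_congr rfl hrow, sum_congr rfl fun k' _ => card_permOrbit_filter_apply_eq jh i k' k,
    sum_const, sum_const, card_univ, Fintype.card_fin, smul_eq_mul, smul_eq_mul] at hcount
  exact hcount.symm

/-- The multinomial coefficient `(m-1 choose α - eᵢ)` of the paper. -/
def reducedMultinomial (jh : Idx m n) (i : Fin n) : ℕ :=
  Nat.multinomial (suppIdx jh) fun q => if q = i then multIdx jh q - 1 else multIdx jh q

lemma card_permOrbit_filter_apply_of_mem {jh : Idx m n} {i : Fin n} (hi : i ∈ suppIdx jh)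
    (k : Fin m) : #{j ∈ permOrbit jh | j k = i} = reducedMultinomial jh i := by
  have h := Nat.sum_mul_multinomial_ite_pred hi (multIdx_pos hi)
  rw [sum_multIdx, ← card_permOrbit, mul_comm _ #(permOrbit jh),
    ← mul_card_permOrbit_filter_apply jh i k] at h
  exact Nat.eq_of_mul_eq_mul_left k.pos h.symm

lemma card_permOrbit_filter_apply_of_notMem {jh : Idx m n} {i : Fin n} (hi : i ∉ suppIdx jh)
    (k : Fin m) : #{j ∈ permOrbit jh | j k = i} = 0 := by
  refine card_eq_zero.2 <| filter_eq_empty_iff.2 fun j hj hji => hi ?_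
  obtain ⟨σ, rfl⟩ := mem_permOrbit.1 hj
  exact hji ▸ mem_image_of_mem jh (mem_univ (σ k))

end PermOrbit

section Scaling

variable {ι : Type*} {s : Finset ι} {m : ℕ} {α : ι → ℕ} {N a : ι → ℝ} {t : ℝ}

lemma prod_pow_mul_pow_le_of_scaling (hsum : ∑ i ∈ s, α i = m) (hN : ∀ i ∈ s, 0 ≤ N i)
    (ht : 0 ≤ t) {d : ι → ℝ} (hd : ∀ i ∈ s, 0 < d i)
    (hdom : ∀ i ∈ s, N i * t * ∏ p ∈ s, d p ^ α p ≤ a i * d i ^ m) :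
    (∏ i ∈ s, N i ^ α i) * t ^ m ≤ ∏ i ∈ s, a i ^ α i := by
  set D := ∏ p ∈ s, d p ^ α p
  have hD : 0 < D := prod_pos fun p hp => pow_pos (hd p hp) _
  have hprod := prod_le_prod (s := s) (fun i hi => pow_nonneg (by have := hN i hi; positivity) _)
    fun i hi => pow_le_pow_left₀ (by have := hN i hi; positivity) (hdom i hi) (α i)
  have hlhs : ∏ i ∈ s, (N i * t * D) ^ α i = (∏ i ∈ s, N i ^ α i) * t ^ m * D ^ m := by
    simp only [mul_pow, prod_mul_distrib, prod_pow_eq_pow_sum, hsum]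
  have hrhs : ∏ i ∈ s, (a i * d i ^ m) ^ α i = (∏ i ∈ s, a i ^ α i) * D ^ m := by
    rw [← prod_pow, ← prod_mul_distrib]
    exact prod_congr rfl fun i _ => by ring
  rw [hlhs, hrhs] at hprod
  exact le_of_mul_le_mul_right hprod (pow_pos hD m)

lemma exists_scaling_of_prod_pow_mul_pow_le (hm : 0 < m) (hα : ∀ i ∈ s, 0 < α i)
    (hsum : ∑ i ∈ s, α i = m) (hN : ∀ i ∈ s, 0 < N i) (ha : ∀ i ∈ s, 0 ≤ a i) (ht : 0 ≤ t)
    (hc : (∏ i ∈ s, N i ^ α i) * t ^ m ≤ ∏ i ∈ s, a i ^ α i) :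
    ∃ d : ι → ℝ, (∀ i, 0 < d i) ∧ ∀ i ∈ s, N i * t * ∏ p ∈ s, d p ^ α p ≤ a i * d i ^ m := by
  classical
  rcases ht.eq_or_lt with rfl | ht
  · exact ⟨1, fun _ => one_pos, fun i hi => by simpa using ha i hi⟩
  have hpos : 0 < ∏ i ∈ s, a i ^ α i :=
    lt_of_lt_of_le (mul_pos (prod_pos fun i hi => pow_pos (hN i hi) _) (pow_pos ht m)) hc
  have ha' : ∀ i ∈ s, 0 < a i := fun i hi => (ha i hi).lt_of_ne fun h0 =>
    hpos.ne' (prod_eq_zero hi (by rw [← h0, zero_pow (hα i hi).ne']))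
  set r : ι → ℝ := fun i => N i * t / a i
  have hr : ∀ i ∈ s, 0 < r i := fun i hi => div_pos (mul_pos (hN i hi) ht) (ha' i hi)
  set d : ι → ℝ := fun i => if i ∈ s then r i ^ (m⁻¹ : ℝ) else 1
  have hd : ∀ i, 0 < d i := fun i => by
    by_cases hi : i ∈ s
    · simpa [d, hi] using Real.rpow_pos_of_pos (hr i hi) _
    · simp [d, hi]
  have hd_pow : ∀ i ∈ s, d i ^ m = r i := fun i hi => by
    simpa [d, hi] using Real.rpow_inv_natCast_pow (hr i hi).le hm.ne'
  have hD : (∏ p ∈ s, d p ^ α p) ^ m ≤ 1 := calc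
    (∏ p ∈ s, d p ^ α p) ^ m = ∏ p ∈ s, r p ^ α p := by
      rw [← prod_pow]
      exact prod_congr rfl fun p hp => by rw [← pow_mul, mul_comm, pow_mul, hd_pow p hp]
    _ = (∏ i ∈ s, N i ^ α i) * t ^ m / ∏ i ∈ s, a i ^ α i := by
      simp only [r, div_pow, mul_pow, prod_div_distrib, prod_mul_distrib, prod_pow_eq_pow_sum,
        hsum]
    _ ≤ 1 := (div_le_one hpos).2 hc
  have hD1 : ∏ p ∈ s, d p ^ α p ≤ 1 :=
    (pow_le_one_iff_of_nonneg (prod_nonneg fun p _ => (pow_pos (hd p) _).le) hm.ne').1 hD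
  refine ⟨d, hd, fun i hi => ?_⟩
  rw [hd_pow i hi]
  calc N i * t * ∏ p ∈ s, d p ^ α p ≤ N i * t :=
        mul_le_of_le_one_right (mul_pos (hN i hi) ht).le hD1
    _ = a i * r i := (mul_div_cancel₀ _ (ha' i hi).ne').symm

end Scaling

section SparseTensor

variable {m n : ℕ} {jh : Idx m n} {B : Idx m n → ℝ}

def SupportedOnPermsAndDiag (jh : Idx m n) (B : Idx m n → ℝ) : Prop :=
  ∀ j : Idx m n, B j ≠ 0 →
    (∃ σ : Equiv.Perm (Fin m), j = jh ∘ σ) ∨ ∃ p ∈ suppIdx jh, j = diagIdx p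

lemma comp_perm_ne_diagIdx (hnc : ¬ ∃ i : Fin n, jh = diagIdx i) (σ : Equiv.Perm (Fin m))
    (i : Fin n) : jh ∘ σ ≠ diagIdx i := fun h =>
  hnc ⟨i, funext fun k => by simpa [diagIdx] using congrFun h (σ.symm k)⟩

lemma apply_diagIdx_eq_zero (hm : 0 < m) (hnc : ¬ ∃ i : Fin n, jh = diagIdx i)
    (hsupp : SupportedOnPermsAndDiag jh B) {i : Fin n} (hi : i ∉ suppIdx jh) :
    B (diagIdx i) = 0 := by
  by_contra hB
  rcases hsupp _ hB with ⟨σ, hσ⟩ | ⟨p, hp, hpi⟩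
  · exact comp_perm_ne_diagIdx hnc σ i hσ.symm
  · have hip : i = p := congrFun hpi ⟨0, hm⟩
    exact hi (hip ▸ hp)

lemma rowSum_scaled (hm : 0 < m) (hnc : ¬ ∃ i : Fin n, jh = diagIdx i) (hsym : IsSymmetric B)
    (hsupp : SupportedOnPermsAndDiag jh B) {d : Fin n → ℝ} (hd : ∀ i, 0 ≤ d i) (i : Fin n) :
    rowSum hm (fun j => B j * ∏ k, d (j k)) i
      = #{j ∈ permOrbit jh | j ⟨0, hm⟩ = i} * (|B jh| * ∏ k, d (jh k)) := by
  have hslice : {j ∈ permOrbit jh | j ⟨0, hm⟩ = i}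
      ⊆ univ.filter fun j : Idx m n => j ⟨0, hm⟩ = i ∧ j ≠ diagIdx i := by
    intro j hj
    obtain ⟨hjorb, hji⟩ := mem_filter.1 hj
    obtain ⟨σ, rfl⟩ := mem_permOrbit.1 hjorb
    exact mem_filter.2 ⟨mem_univ _, hji, comp_perm_ne_diagIdx hnc σ i⟩
  have hzero : ∀ j ∈ univ.filter (fun j : Idx m n => j ⟨0, hm⟩ = i ∧ j ≠ diagIdx i),
      j ∉ {j ∈ permOrbit jh | j ⟨0, hm⟩ = i} → |B j * ∏ k, d (j k)| = 0 := by
    intro j hj hjslice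
    obtain ⟨-, hji, hjdiag⟩ := mem_filter.1 hj
    suffices B j = 0 by simp [this]
    by_contra hB
    rcases hsupp j hB with ⟨σ, rfl⟩ | ⟨p, -, rfl⟩
    · exact hjslice (mem_filter.2 ⟨mem_permOrbit.2 ⟨σ, rfl⟩, hji⟩)
    · exact hjdiag (by rw [← hji]; rfl)
  have hterm : ∀ j ∈ {j ∈ permOrbit jh | j ⟨0, hm⟩ = i},
      |B j * ∏ k, d (j k)| = |B jh| * ∏ k, d (jh k) := by
    intro j hj
    obtain ⟨σ, rfl⟩ := mem_permOrbit.1 (mem_filter.1 hj).1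
    rw [hsym σ jh, abs_mul, Function.comp_def, Equiv.prod_comp σ fun k => d (jh k),
      abs_of_nonneg (prod_nonneg fun k _ => hd (jh k))]
  rw [rowSum, ← sum_subset hslice hzero, sum_congr rfl hterm, sum_const, nsmul_eq_mul]

lemma isDD_scaled_iff (hm : 0 < m) (hnc : ¬ ∃ i : Fin n, jh = diagIdx i)
    (hsym : IsSymmetric B) (hsupp : SupportedOnPermsAndDiag jh B)
    (hdiag : ∀ i, 0 ≤ B (diagIdx i)) {d : Fin n → ℝ} (hd : ∀ i, 0 < d i) :
    IsDD hm (fun j => B j * ∏ k, d (j k)) ↔ ∀ i ∈ suppIdx jh,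
      (reducedMultinomial jh i : ℝ) * |B jh| * ∏ p ∈ suppIdx jh, d p ^ multIdx jh p
        ≤ B (diagIdx i) * d i ^ m := by
  refine forall_congr' fun i => ?_
  have hdiag_scaled : B (diagIdx i) * ∏ k : Fin m, d (diagIdx i k) = B (diagIdx i) * d i ^ m := by
    simp [diagIdx]
  beta_reduce
  rw [rowSum_scaled hm hnc hsym hsupp (fun i => (hd i).le), hdiag_scaled,
    abs_of_nonneg (mul_nonneg (hdiag i) (pow_pos (hd i) m).le), prod_apply_eq_prod_pow_multIdx,
    ← mul_assoc]
  by_cases hi : i ∈ suppIdx jh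
  · simp only [card_permOrbit_filter_apply_of_mem hi, hi, forall_true_left]
  · simp only [card_permOrbit_filter_apply_of_notMem hi, hi, IsEmpty.forall_iff, iff_true]
    simpa using mul_nonneg (hdiag i) (pow_pos (hd i) m).le

lemma diag_nonneg_iff (hm : 0 < m) (hnc : ¬ ∃ i : Fin n, jh = diagIdx i)
    (hsupp : SupportedOnPermsAndDiag jh B) :
    (∀ i, 0 ≤ B (diagIdx i)) ↔ ∀ p ∈ suppIdx jh, 0 ≤ B (diagIdx p) := by
  refine ⟨fun h p _ => h p, fun h i => ?_⟩
  by_cases hi : i ∈ suppIdx jh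
  · exact h i hi
  · exact (apply_diagIdx_eq_zero hm hnc hsupp hi).ge

end SparseTensor

/-- Characterization of sparse `GDD⁺` tensors: a symmetric tensor supported on the
permutations of a non-diagonal multi-index `jh` and on the diagonal positions with values
in `jh` is `GDD⁺` iff its relevant diagonal entries are nonnegative and
`∏_k b_{j_k…j_k}^{α_k} ≥ c |b_{jh}|^m`. -/
theorem sparse_GDDplus_iff (m n : ℕ) (hm : 0 < m) (jh : Idx m n)
    (hnc : ¬ ∃ i : Fin n, jh = diagIdx i) (B : Idx m n → ℝ) (hsym : IsSymmetric B)
    (hsupp : ∀ j : Idx m n, B j ≠ 0 →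
      (∃ σ : Equiv.Perm (Fin m), j = jh ∘ σ) ∨ ∃ p ∈ suppIdx jh, j = diagIdx p) :
    IsGDDplus hm B ↔
      ((∀ p ∈ suppIdx jh, 0 ≤ B (diagIdx p)) ∧
        (cCoef jh : ℝ) * |B jh| ^ m ≤ ∏ p ∈ suppIdx jh, B (diagIdx p) ^ multIdx jh p) := by
  have hc : (cCoef jh : ℝ) = ∏ p ∈ suppIdx jh, (reducedMultinomial jh p : ℝ) ^ multIdx jh p := by
    simp [cCoef, reducedMultinomial]
  have hN : ∀ p ∈ suppIdx jh, (0 : ℝ) < reducedMultinomial jh p := fun _ _ =>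
    Nat.cast_pos.2 (Nat.multinomial_pos _ _)
  rw [hc, IsGDDplus, ← diag_nonneg_iff hm hnc hsupp]
  constructor
  · rintro ⟨-, hdiag, d, hd, hDD⟩
    exact ⟨hdiag, prod_pow_mul_pow_le_of_scaling (sum_multIdx jh) (fun p hp => (hN p hp).le)
      (abs_nonneg _) (fun p _ => hd p) ((isDD_scaled_iff hm hnc hsym hsupp hdiag hd).1 hDD)⟩
  · rintro ⟨hdiag, hineq⟩
    obtain ⟨d, hd, hdom⟩ := exists_scaling_of_prod_pow_mul_pow_le hm (fun p hp => multIdx_pos hp)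
      (sum_multIdx jh) hN (fun p _ => hdiag p) (abs_nonneg _) hineq
    exact ⟨hsym, hdiag, d, hd, (isDD_scaled_iff hm hnc hsym hsupp hdiag hd).2 hdom⟩
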